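/- arXiv:1304.4836 — 2 statements merged into one kernel-verified Lean document; each statement's English description precedes it below -/
import Mathlib

section
/- Let (a,b), (c,d) ∈ ℤ² with |ad − bc| = r > 1, gcd(a,b) = 1 and gcd(c,d) = 1. Then there exists (e,f) ∈ ℤ² such that |af − be| = 1, gcd(e,f) = 1, and |cf − de| < r. -/
theorem stmt_0 (a b c d : ℤ) (r : ℕ) (hr : (a * d - b * c).natAbs = r) (hr1 : 1 < r)
    (hab : Int.gcd a b = 1) (hcd : Int.gcd c d = 1) :
    ∃ e f : ℤ, (a * f - b * e).natAbs = 1 ∧ Int.gcd e f = 1 ∧ (c * f - d * e).natAbs < r := by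
  obtain ⟨u, v, huv⟩ := Int.isCoprime_iff_gcd_eq_one.mpr hab
  set Δ := a * d - b * c with hΔ
  have hΔ0 : Δ ≠ 0 := by
    intro h
    rw [h] at hr
    simp at hr
    omega
  set s := c * u + d * v with hs
  set t := s / Δ with ht
  refine ⟨-v + t * a, u + t * b, ?_, ?_, ?_⟩
  · have h1 : a * (u + t * b) - b * (-v + t * a) = 1 := by linear_combination huv
    rw [h1]; rfl
  · refine Int.isCoprime_iff_gcd_eq_one.mp ⟨-b, a, ?_⟩
    linear_combination huv
  · have heq : c * (u + t * b) - d * (-v + t * a) = s % Δ := by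
      rw [Int.emod_def]; ring
    have h0 : 0 ≤ s % Δ := Int.emod_nonneg s hΔ0
    have h2 : s % Δ < |Δ| := Int.emod_lt_abs s hΔ0
    rw [heq]
    rw [← hr]
    rcases abs_cases Δ with ⟨ha, _⟩ | ⟨ha, _⟩ <;> omega
end

section
/- Let p, q₁, q₂ ∈ ℤ with p > 0, gcd(p,q₁) = gcd(p,q₂) = 1, and let (a,b,c) ∈ ℤ³. The four pairs {(1,0,0),(a,b,c)}, {(0,1,0),(a,b,c)}, {(−q₁,−q₂,p),(a,b,c)}, together with the pairs among {(−q₁,−q₂,p),(1,0,0),(0,1,0)}, all extend to bases of ℤ³ if and only if gcd(a,c) = 1, gcd(b,c) = 1, and gcd(bp + q₂c, ap + q₁c, bq₁ − aq₂) = 1. -/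
/-- Two vectors `u v : ℤ³` extend to a `ℤ`-basis of `ℤ³` iff the gcd of the three
`2×2` minors of the matrix with rows `u, v` equals `1`. -/
def IsPartOfBasis3 (u v : Fin 3 → ℤ) : Prop :=
  Int.gcd (Int.gcd (u 0 * v 1 - u 1 * v 0) (u 0 * v 2 - u 2 * v 0))
    (u 1 * v 2 - u 2 * v 1) = 1

lemma gcd3_cast (x y z : ℤ) :
    Int.gcd (↑(Int.gcd x y)) z = Nat.gcd (Nat.gcd x.natAbs y.natAbs) z.natAbs := by
  simp [Int.gcd]

lemma g3 (x y z : ℤ) :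
    Int.gcd (↑(Int.gcd (-z) (-y))) (-x) = Int.gcd (↑(Int.gcd x y)) z := by
  simp only [gcd3_cast, Int.natAbs_neg]
  rw [Nat.gcd_comm z.natAbs y.natAbs, Nat.gcd_comm _ x.natAbs, ← Nat.gcd_assoc]

theorem stmt_6 (p q₁ q₂ a b c : ℤ) (hp : 0 < p)
    (h1 : Int.gcd p q₁ = 1) (h2 : Int.gcd p q₂ = 1) :
    (IsPartOfBasis3 ![1, 0, 0] ![a, b, c] ∧
     IsPartOfBasis3 ![0, 1, 0] ![a, b, c] ∧
     IsPartOfBasis3 ![-q₁, -q₂, p] ![a, b, c] ∧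
     IsPartOfBasis3 ![-q₁, -q₂, p] ![1, 0, 0] ∧
     IsPartOfBasis3 ![-q₁, -q₂, p] ![0, 1, 0] ∧
     IsPartOfBasis3 ![1, 0, 0] ![0, 1, 0]) ↔
    (Int.gcd a c = 1 ∧ Int.gcd b c = 1 ∧
      Int.gcd (Int.gcd (b * p + q₂ * c) (a * p + q₁ * c)) (b * q₁ - a * q₂) = 1) := by
  simp only [IsPartOfBasis3, Matrix.cons_val_zero, Matrix.cons_val_one, Matrix.head_cons,
    Matrix.cons_val_two, Matrix.tail_cons]
  ring_nf
  have e3 : Int.gcd (↑(Int.gcd (-(b * q₁) + a * q₂) (-(a * p) - c * q₁))) (-(b * p) - c * q₂) =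
      Int.gcd (↑(Int.gcd (b * p + c * q₂) (a * p + c * q₁))) (b * q₁ - a * q₂) := by
    have := g3 (b * p + c * q₂) (a * p + c * q₁) (b * q₁ - a * q₂)
    rw [← this]; ring_nf
  constructor
  · rintro ⟨hA, hB, hC, -, -, -⟩
    refine ⟨?_, ?_, ?_⟩
    · simpa [gcd3_cast, Int.gcd, Int.natAbs_abs] using hB
    · simpa [gcd3_cast, Int.gcd] using hA
    · rw [← e3]; exact hC
  · rintro ⟨hac, hbc, hG⟩
    refine ⟨?_, ?_, ?_, ?_, ?_, ?_⟩
    · simpa [gcd3_cast, Int.gcd] using hbc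
    · simpa [gcd3_cast, Int.gcd, Int.natAbs_abs] using hac
    · rw [e3]; exact hG
    · simpa [gcd3_cast, Int.gcd, Int.natAbs_abs, Nat.gcd_comm] using h2
    · simpa [gcd3_cast, Int.gcd, Int.natAbs_abs, Nat.gcd_comm] using h1
    · simp [gcd3_cast]
end
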